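/- arXiv:1610.05129 — 2 statements merged into one kernel-verified Lean document; each statement's English description precedes it below -/
import Mathlib

section
/- Let p ∈ ℝ^K be a probability distribution with p[i] > 0 for all i, c ∈ [0,1]^K, and ĉ[i] = c[i]·𝟙(a = i)/p[i] for a ~ p. For any probability distributions π₁, …, π_N over [K] and any weights w ∈ Δ([N]), we have E_a[ Σ_{j=1}^N w[j]·(π_j · ĉ)² ] ≤ Σ_{i=1}^K c[i]² ≤ K. -/
open Finset

/-- Second-moment bound for the importance-weighted expert cost estimates:
`E_a[ Σ_j w[j] (π_j · ĉ)² ] ≤ Σ_i c[i]² ≤ K`, where `p = Σ_j w[j] π_j` is the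
mixture distribution from which `a` is drawn. -/
theorem stmt_6 (K N : ℕ) (p c : Fin K → ℝ) (π : Fin N → Fin K → ℝ)
    (w : Fin N → ℝ)
    (hp : ∀ i, 0 < p i) (hp1 : ∑ i, p i = 1)
    (hc : ∀ i, c i ∈ Set.Icc (0 : ℝ) 1)
    (hπ : ∀ j i, 0 ≤ π j i) (hπ1 : ∀ j, ∑ i, π j i = 1)
    (hw : ∀ j, 0 ≤ w j) (hw1 : ∑ j, w j = 1)
    (hmix : ∀ i, p i = ∑ j, w j * π j i) :
    (∑ a, p a * ∑ j, w j *
        (∑ i, π j i * (c i * (if a = i then (1 : ℝ) else 0) / p i)) ^ 2)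
      ≤ ∑ i, (c i) ^ 2 ∧ (∑ i, (c i) ^ 2) ≤ (K : ℝ) := by
  have hπle : ∀ j a, π j a ≤ 1 := by
    intro j a
    calc π j a ≤ ∑ i, π j i :=
          Finset.single_le_sum (fun i _ => hπ j i) (Finset.mem_univ a)
      _ = 1 := hπ1 j
  have hinner : ∀ j a, (∑ i, π j i * (c i * (if a = i then (1 : ℝ) else 0) / p i))
      = π j a * c a / p a := by
    intro j a
    rw [Finset.sum_eq_single a]
    · simp [mul_div_assoc]
    · intro i _ hi
      simp [Ne.symm hi]
    · simp
  constructor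
  · have key : ∀ a, p a * ∑ j, w j *
        (∑ i, π j i * (c i * (if a = i then (1 : ℝ) else 0) / p i)) ^ 2 ≤ (c a) ^ 2 := by
      intro a
      have hpa := hp a
      have step : ∑ j, w j * (π j a * c a / p a) ^ 2 ≤ (c a / p a) ^ 2 * p a := by
        have : ∀ j ∈ Finset.univ, w j * (π j a * c a / p a) ^ 2
            ≤ (c a / p a) ^ 2 * (w j * π j a) := by
          intro j _
          have h1 : (π j a * c a / p a) ^ 2 = (c a / p a) ^ 2 * (π j a) ^ 2 := by
            ring
          rw [h1]
          have h2 : w j * (π j a) ^ 2 ≤ w j * π j a := by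
            have := mul_le_mul_of_nonneg_left
              (mul_le_of_le_one_left (hπ j a) (hπle j a)) (hw j)
            simpa [pow_two, mul_assoc] using this
          nlinarith [sq_nonneg (c a / p a), hw j, hπ j a]
        calc ∑ j, w j * (π j a * c a / p a) ^ 2
            ≤ ∑ j, (c a / p a) ^ 2 * (w j * π j a) := Finset.sum_le_sum this
          _ = (c a / p a) ^ 2 * p a := by
              rw [← Finset.mul_sum, ← hmix a]
      calc p a * ∑ j, w j *
            (∑ i, π j i * (c i * (if a = i then (1 : ℝ) else 0) / p i)) ^ 2
          = p a * ∑ j, w j * (π j a * c a / p a) ^ 2 := by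
            simp only [hinner]
        _ ≤ p a * ((c a / p a) ^ 2 * p a) :=
            mul_le_mul_of_nonneg_left step hpa.le
        _ = (c a) ^ 2 := by
            field_simp
    exact Finset.sum_le_sum (fun a _ => key a)
  · have h1 : ∑ i, (c i) ^ 2 ≤ ∑ _i : Fin K, (1 : ℝ) :=
      Finset.sum_le_sum (fun i _ => by nlinarith [(hc i).1, (hc i).2])
    simpa using h1
end

section
/- Let q̂ ∈ [0,1] and define r_min(q̂) = −1 if q̂ ≤ 1/2 and r_min(q̂) = −1/2 − 1/(2q̂) + q̂ if 1/2 ≤ q̂ ≤ 1. Then r_min(q̂) equals min over x in the 2-simplex with 2q̂·x[1] − 1 ≤ 0 of (1 − q̂)·(−x[1]) + q̂·(−x[1] + x[2]). -/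
/-!
On the simplex `x₂ = 1 - x₁`, so the loss is `q - (1 + q) x₁`, which is nonincreasing in `x₁`
because `q ≥ 0`. The minimum is therefore attained at the largest feasible `x₁`, which is `1`
when `2q ≤ 1` and `1 / (2q)` otherwise.
-/

/-- The first coordinates of the points of `O'`. -/
def comparatorFirstCoords (q : ℝ) : Set ℝ :=
  {t | 0 ≤ t ∧ t ≤ 1 ∧ 2 * q * t ≤ 1}

lemma isGreatest_comparatorFirstCoords_of_le_half {q : ℝ} (hq : q ≤ 1 / 2) :
    IsGreatest (comparatorFirstCoords q) 1 :=
  ⟨⟨zero_le_one, le_rfl, by linarith⟩, fun _ ht => ht.2.1⟩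

lemma isGreatest_comparatorFirstCoords_of_half_lt {q : ℝ} (hq : 1 / 2 < q) :
    IsGreatest (comparatorFirstCoords q) (1 / (2 * q)) := by
  have h2q : 0 < 2 * q := by linarith
  refine ⟨⟨by positivity, ?_, ?_⟩, fun t ht => ?_⟩
  · rw [div_le_one h2q]; linarith
  · rw [mul_one_div_cancel h2q.ne']
  · rw [le_div_iff₀ h2q]; linarith [ht.2.2]

lemma mixed_loss_eq_of_add_eq_one {q x₁ x₂ : ℝ} (h : x₁ + x₂ = 1) :
    (1 - q) * (-x₁) + q * (-x₁ + x₂) = q - (1 + q) * x₁ := by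
  obtain rfl : x₂ = 1 - x₁ := by linarith
  ring

lemma mixed_loss_set_eq_image (q : ℝ) :
    {val : ℝ | ∃ x : ℝ × ℝ, 0 ≤ x.1 ∧ 0 ≤ x.2 ∧ x.1 + x.2 = 1 ∧
        2 * q * x.1 - 1 ≤ 0 ∧
        val = (1 - q) * (-x.1) + q * (-x.1 + x.2)} =
      (fun t => q - (1 + q) * t) '' comparatorFirstCoords q := by
  ext v
  constructor
  · rintro ⟨⟨x₁, x₂⟩, hx₁, hx₂, hsum, hcon, rfl⟩
    exact ⟨x₁, ⟨hx₁, by linarith, by linarith⟩, (mixed_loss_eq_of_add_eq_one hsum).symm⟩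
  · rintro ⟨t, ⟨ht₀, ht₁, hcon⟩, rfl⟩
    exact ⟨(t, 1 - t), ht₀, by linarith, by ring, by linarith,
      (mixed_loss_eq_of_add_eq_one (by ring)).symm⟩

/-- Closed form for the best achievable loss over the comparator set
`O' = {x ∈ Δ([2]) : 2q̂ x₁ ≤ 1}` in Proposition 1:
the minimum of `(1 − q̂)(−x₁) + q̂(−x₁ + x₂)` is `−1` if `q̂ ≤ 1/2` and
`−1/2 − 1/(2q̂) + q̂` otherwise. -/
theorem stmt_18 (q : ℝ) (hq : q ∈ Set.Icc (0 : ℝ) 1) :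
    IsLeast
      {val : ℝ | ∃ x : ℝ × ℝ, 0 ≤ x.1 ∧ 0 ≤ x.2 ∧ x.1 + x.2 = 1 ∧
        2 * q * x.1 - 1 ≤ 0 ∧
        val = (1 - q) * (-x.1) + q * (-x.1 + x.2)}
      (if q ≤ 1 / 2 then -1 else -1 / 2 - 1 / (2 * q) + q) := by
  have hanti : Antitone fun t : ℝ => q - (1 + q) * t := fun a b hab => by
    nlinarith [hq.1]
  rw [mixed_loss_set_eq_image]
  split_ifs with h
  · rw [show (-1 : ℝ) = q - (1 + q) * 1 by ring]
    exact hanti.map_isGreatest (isGreatest_comparatorFirstCoords_of_le_half h)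
  · have hq0 : q ≠ 0 := by linarith
    rw [show -1 / 2 - 1 / (2 * q) + q = q - (1 + q) * (1 / (2 * q)) by field_simp; ring]
    exact hanti.map_isGreatest (isGreatest_comparatorFirstCoords_of_half_lt (not_le.mp h))
end
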